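/- arXiv:2512.25043 — 2 statements merged into one kernel-verified Lean document; each statement's English description precedes it below -/
import Mathlib

section
/- Let m ≥ 1 be an integer, let G' be a finite simple graph, let T ⊆ E(G') be an edge set, and let S ⊆ V(G') be a set of exactly 24m vertices such that: (a) every two distinct vertices of S are adjacent in G'; (b) every vertex of S is incident to at most 2 edges of T having both endpoints in S; and (c) at most 3m edges of G' have exactly one endpoint in S. Then for every A' ⊆ V(G') such that both A' ∩ S and S \ A' are nonempty, the number of edges of T in δ_{G'}(A') having at least one endpoint in S is strictly less than one third of the number of edges of δ_{G'}(A') having at least one endpoint in S. -/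
/-!
The cut contains every edge between the two sides `A' ∩ S` and `S \ A'` of the clique, that is
`a * b` edges where `a + b = 24 m`. A `T`-edge of the cut touching `S` either leaves `S`
(at most `3 m` of these) or lies inside `S`; in the latter case it meets both sides, so the
degree bound on `T` allows at most `2 * min a b` of them. Finally `3 (2 min a b + 3 m) < a b`.
-/

/-- The edge cut `δ_G(A)`: the set of edges of `G` with exactly one endpoint in `A`. -/
def cutSet {V : Type*} (G : SimpleGraph V) (A : Set V) : Set (Sym2 V) :=
  {e | e ∈ G.edgeSet ∧ ∃ u ∈ A, ∃ v ∉ A, e = s(u, v)}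

lemma Set.ncard_biUnion_le_ncard_mul {α ι : Type*} {X : Set ι} (hX : X.Finite)
    (F : ι → Set α) {k : ℕ} (hF : ∀ i ∈ X, (F i).ncard ≤ k) :
    (⋃ i ∈ X, F i).ncard ≤ X.ncard * k := by
  have hsum := hX.toFinset.set_ncard_biUnion_le F
  simp only [Set.Finite.mem_toFinset] at hsum
  rw [Set.ncard_eq_toFinset_card X hX]
  exact hsum.trans (Finset.sum_le_card_nsmul _ _ _ fun i hi => hF i (hX.mem_toFinset.1 hi))

lemma three_mul_two_mul_min_add_lt_mul {m a b : ℕ} (hab : a + b = 24 * m) (ha : 1 ≤ a)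
    (hb : 1 ≤ b) : 3 * (2 * min a b + 3 * m) < a * b := by
  wlog h : a ≤ b generalizing a b
  · simpa [min_comm, mul_comm] using this (b := a) (a := b) (by omega) hb ha (by omega)
  rw [min_eq_left h]
  rcases Nat.eq_or_lt_of_le ha with rfl | ha2
  · omega
  · have hm : 1 ≤ m := by omega
    have hb12 : 12 * m ≤ b := by omega
    nlinarith [Nat.mul_le_mul_left a hb12, Nat.mul_le_mul ha2 hm]

section cut

variable {V : Type*} {G : SimpleGraph V}

lemma mem_cutSet_or_forall_mem_of_exists_mem {S : Set V} {e : Sym2 V} (he : e ∈ G.edgeSet)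
    (hS : ∃ u ∈ S, u ∈ e) : e ∈ cutSet G S ∨ ∀ u ∈ e, u ∈ S := by
  induction e using Sym2.ind with | h u v => ?_
  obtain ⟨w, hwS, hw⟩ := hS
  by_cases huS : u ∈ S <;> by_cases hvS : v ∈ S
  · exact .inr fun x hx => by rcases Sym2.mem_iff.1 hx with rfl | rfl <;> assumption
  · exact .inl ⟨he, u, huS, v, hvS, rfl⟩
  · exact .inl ⟨he, v, hvS, u, huS, Sym2.eq_swap⟩
  · rcases Sym2.mem_iff.1 hw with rfl | rfl <;> contradiction

lemma exists_mem_inter_and_exists_mem_sdiff_of_mem_cutSet {A S : Set V} {e : Sym2 V}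
    (he : e ∈ cutSet G A) (heS : ∀ u ∈ e, u ∈ S) :
    (∃ u ∈ A ∩ S, u ∈ e) ∧ ∃ v ∈ S \ A, v ∈ e := by
  obtain ⟨-, u, huA, v, hvA, rfl⟩ := he
  exact ⟨⟨u, ⟨huA, heS u (Sym2.mem_mk_left u v)⟩, Sym2.mem_mk_left u v⟩,
    v, ⟨heS v (Sym2.mem_mk_right u v), hvA⟩, Sym2.mem_mk_right u v⟩

variable [Finite V]

lemma ncard_inter_mul_ncard_sdiff_le_ncard_cutSet {S : Set V} (hS : G.IsClique S) (A : Set V) :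
    (A ∩ S).ncard * (S \ A).ncard ≤ {e ∈ cutSet G A | ∃ u ∈ S, u ∈ e}.ncard := by
  have hinj : Set.InjOn (fun p : V × V => s(p.1, p.2)) ((A ∩ S) ×ˢ (S \ A)) := by
    rintro ⟨u, v⟩ ⟨huA, -⟩ ⟨u', v'⟩ ⟨-, hvA'⟩ h
    rcases Sym2.eq_iff.1 h with ⟨rfl, rfl⟩ | ⟨rfl, -⟩
    · rfl
    · exact absurd huA.1 hvA'.2
  have hsub : (fun p : V × V => s(p.1, p.2)) '' ((A ∩ S) ×ˢ (S \ A)) ⊆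
      {e ∈ cutSet G A | ∃ u ∈ S, u ∈ e} := by
    rintro e ⟨⟨u, v⟩, ⟨⟨huA, huS⟩, hvS, hvA⟩, rfl⟩
    exact ⟨⟨hS huS hvS (ne_of_mem_of_not_mem huA hvA), u, huA, v, hvA, rfl⟩,
      u, huS, Sym2.mem_mk_left u v⟩
  rw [← Set.ncard_prod, ← hinj.ncard_image]
  exact Set.ncard_le_ncard hsub

lemma ncard_cutSet_internal_le {A S : Set V} {T : Set (Sym2 V)} {k : ℕ}
    (hT : ∀ v ∈ S, {e ∈ T | v ∈ e ∧ ∀ u ∈ e, u ∈ S}.ncard ≤ k) :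
    {e ∈ cutSet G A | e ∈ T ∧ ∀ u ∈ e, u ∈ S}.ncard ≤ min (A ∩ S).ncard (S \ A).ncard * k := by
  have hbound : ∀ X ⊆ S, (∀ e ∈ cutSet G A, (∀ u ∈ e, u ∈ S) → ∃ v ∈ X, v ∈ e) →
      {e ∈ cutSet G A | e ∈ T ∧ ∀ u ∈ e, u ∈ S}.ncard ≤ X.ncard * k := by
    intro X hXS hX
    refine (Set.ncard_le_ncard (t := ⋃ v ∈ X, {e ∈ T | v ∈ e ∧ ∀ u ∈ e, u ∈ S}) ?_).trans
      (Set.ncard_biUnion_le_ncard_mul X.toFinite _ fun v hv => hT v (hXS hv))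
    rintro e ⟨he, heT, heS⟩
    obtain ⟨v, hvX, hve⟩ := hX e he heS
    exact Set.mem_biUnion hvX ⟨heT, hve, heS⟩
  rw [min_mul_of_nonneg _ _ (Nat.zero_le k)]
  exact le_min
    (hbound _ Set.inter_subset_right fun e he heS =>
      (exists_mem_inter_and_exists_mem_sdiff_of_mem_cutSet he heS).1)
    (hbound _ Set.sdiff_subset fun e he heS =>
      (exists_mem_inter_and_exists_mem_sdiff_of_mem_cutSet he heS).2)

lemma ncard_cutSet_touching_le {A S : Set V} {T : Set (Sym2 V)} {k : ℕ}
    (hT : ∀ v ∈ S, {e ∈ T | v ∈ e ∧ ∀ u ∈ e, u ∈ S}.ncard ≤ k) :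
    {e ∈ cutSet G A | e ∈ T ∧ ∃ u ∈ S, u ∈ e}.ncard ≤
      min (A ∩ S).ncard (S \ A).ncard * k + (cutSet G S).ncard := by
  have hsub : {e ∈ cutSet G A | e ∈ T ∧ ∃ u ∈ S, u ∈ e} ⊆
      {e ∈ cutSet G A | e ∈ T ∧ ∀ u ∈ e, u ∈ S} ∪ cutSet G S := by
    rintro e ⟨he, heT, heS⟩
    rcases mem_cutSet_or_forall_mem_of_exists_mem he.1 heS with hcut | hin
    · exact .inr hcut
    · exact .inl ⟨he, heT, hin⟩
  exact (Set.ncard_le_ncard hsub).trans <| (Set.ncard_union_le _ _).trans <|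
    Nat.add_le_add_right (ncard_cutSet_internal_le hT) _

end cut

theorem cut_splitting_clique_is_thin_general
    {V' : Type} [Fintype V'] (m : ℕ)
    (G' : SimpleGraph V') (T : Set (Sym2 V'))
    (S : Set V') (hScard : S.ncard = 24 * m)
    (hclique : ∀ u ∈ S, ∀ v ∈ S, u ≠ v → G'.Adj u v)
    (hTdeg : ∀ v ∈ S, {e ∈ T | v ∈ e ∧ ∀ u ∈ e, u ∈ S}.ncard ≤ 2)
    (hleave : (cutSet G' S).ncard ≤ 3 * m) :
    ∀ A' : Set V', (A' ∩ S).Nonempty → (S \ A').Nonempty →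
      3 * {e ∈ cutSet G' A' | e ∈ T ∧ ∃ u ∈ S, u ∈ e}.ncard <
        {e ∈ cutSet G' A' | ∃ u ∈ S, u ∈ e}.ncard := by
  intro A' hA hB
  have hsides : (A' ∩ S).ncard + (S \ A').ncard = 24 * m := by
    rw [Set.inter_comm, Set.ncard_inter_add_ncard_sdiff_eq_ncard S A', hScard]
  calc 3 * {e ∈ cutSet G' A' | e ∈ T ∧ ∃ u ∈ S, u ∈ e}.ncard
      ≤ 3 * (2 * min (A' ∩ S).ncard (S \ A').ncard + 3 * m) := by
        have htouch := ncard_cutSet_touching_le (G := G') (A := A') hTdeg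
        omega
    _ < (A' ∩ S).ncard * (S \ A').ncard :=
        three_mul_two_mul_min_add_lt_mul hsides ((Set.ncard_pos).2 hA)
          ((Set.ncard_pos).2 hB)
    _ ≤ _ := ncard_inter_mul_ncard_sdiff_le_ncard_cutSet hclique A'

/-- Abstract form of Lemma 6: if `S` is a clique of `24 m` vertices, every vertex of `S`
is incident to at most `2` edges of `T` internal to `S`, and at most `3 m` edges leave
`S`, then any cut splitting `S` has `T`-thickness strictly below `1/3` on the portion
of the cut touching `S`. -/
theorem cut_splitting_clique_is_thin
    {V' : Type} [Fintype V'] (m : ℕ) (hm : 1 ≤ m)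
    (G' : SimpleGraph V') (T : Set (Sym2 V')) (hT : T ⊆ G'.edgeSet)
    (S : Set V') (hScard : S.ncard = 24 * m)
    (hclique : ∀ u ∈ S, ∀ v ∈ S, u ≠ v → G'.Adj u v)
    (hTdeg : ∀ v ∈ S, {e ∈ T | v ∈ e ∧ ∀ u ∈ e, u ∈ S}.ncard ≤ 2)
    (hleave : (cutSet G' S).ncard ≤ 3 * m) :
    ∀ A' : Set V', (A' ∩ S).Nonempty → (S \ A').Nonempty →
      3 * {e ∈ cutSet G' A' | e ∈ T ∧ ∃ u ∈ S, u ∈ e}.ncard <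
        {e ∈ cutSet G' A' | ∃ u ∈ S, u ∈ e}.ncard :=
  cut_splitting_clique_is_thin_general m G' T S hScard hclique hTdeg hleave
end

section
/- For all integers m and a with m ≥ 1 and 1 ≤ a ≤ 12m, the inequality (3m + 2a)/(3m + a(24m − a)) ≤ 1/8 + 1/(6m) holds, and moreover 1/8 + 1/(6m) < 1/3 (all quantities interpreted in the rational numbers). -/
section ThicknessBound

variable {K : Type*} [Field K] [LinearOrder K] [IsStrictOrderedRing K]

/-- The difference of the two sides is a concave quadratic in `a`; it decomposes as
`(3m + 4)(a - 1)(12m - a) + (36m² - 3m - 4)(a - 1) + (9m² + 57m - 4)`, a sum of nonnegative terms. -/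
lemma thickness_cross_mul_le {m a : K} (hm : 1 ≤ m) (ha : 1 ≤ a) (ha' : a ≤ 12 * m) :
    24 * m * (3 * m + 2 * a) ≤ (3 * m + 4) * (3 * m + a * (24 * m - a)) := by
  have hm2 : 1 ≤ m * m := by nlinarith
  have hcoeff : 0 ≤ 36 * (m * m) - 3 * m - 4 := by nlinarith
  have hconcave : 0 ≤ (3 * m + 4) * (a - 1) * (12 * m - a) :=
    mul_nonneg (mul_nonneg (by linarith) (by linarith)) (by linarith)
  have hlinear : 0 ≤ (36 * (m * m) - 3 * m - 4) * (a - 1) := mul_nonneg hcoeff (by linarith)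
  linarith

lemma one_div_eight_add_one_div_six_mul (m : K) (hm : m ≠ 0) :
    1 / 8 + 1 / (6 * m) = (3 * m + 4) / (24 * m) := by
  field_simp
  ring

lemma thickness_ratio_le {m a : K} (hm : 1 ≤ m) (ha : 1 ≤ a) (ha' : a ≤ 12 * m) :
    (3 * m + 2 * a) / (3 * m + a * (24 * m - a)) ≤ 1 / 8 + 1 / (6 * m) := by
  have hden : 0 < 3 * m + a * (24 * m - a) := by nlinarith
  rw [one_div_eight_add_one_div_six_mul m (by positivity), div_le_div_iff₀ hden (by positivity)]
  linarith [thickness_cross_mul_le hm ha ha']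

lemma one_div_eight_add_one_div_six_mul_lt_one_third {m : K} (hm : 1 ≤ m) :
    1 / 8 + 1 / (6 * m) < 1 / 3 := by
  rw [one_div_eight_add_one_div_six_mul m (by positivity), div_lt_div_iff₀ (by positivity) three_pos]
  linarith

end ThicknessBound

/-- The numerical inequality at the heart of Lemma 6: for `m ≥ 1` and `1 ≤ a ≤ 12 m`,
`(3m + 2a)/(3m + a(24m − a)) ≤ 1/8 + 1/(6m)`, and `1/8 + 1/(6m) < 1/3`. -/
theorem thickness_numerical_bound (m a : ℤ) (hm : 1 ≤ m) (ha : 1 ≤ a)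
    (ha' : a ≤ 12 * m) :
    ((3 * m + 2 * a : ℚ) / (3 * m + a * (24 * m - a)) ≤
        1 / 8 + 1 / (6 * (m : ℚ))) ∧
      (1 / 8 + 1 / (6 * (m : ℚ)) < 1 / 3) := by
  have hmq : (1 : ℚ) ≤ m := by exact_mod_cast hm
  have haq : (1 : ℚ) ≤ a := by exact_mod_cast ha
  have haq' : (a : ℚ) ≤ 12 * m := by exact_mod_cast ha'
  exact ⟨thickness_ratio_le hmq haq haq', one_div_eight_add_one_div_six_mul_lt_one_third hmq⟩
end
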